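/- Let Y be an invertible symmetric n×n real matrix depending on the symmetric complex matrix Z via Y = Im Z, and R = Y^{-1}. Then ∂R_{st}/∂Z_{kl} = 2^{−δ(k,l)−1}·i·(R_{kt}R_{sl} + R_{ks}R_{tl}), where ∂/∂Z_{kl} denotes the Wirtinger derivative and δ is the Kronecker delta (the variables Z_{kl} for k ≤ l, with Z symmetric). -/

import Mathlib

open Complex Matrix

/-- The Wirtinger derivative ∂/∂ζ of a function ℂ → ℂ (viewed as ℝ-differentiable). -/
noncomputable def wirtinger (g : ℂ → ℂ) (ζ : ℂ) : ℂ :=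
  ((fderiv ℝ g ζ) 1 - Complex.I * (fderiv ℝ g ζ) Complex.I) / 2

/-- The symmetric elementary matrix associated with the entry pair (k,l). -/
def symBasis (n : ℕ) (k l : Fin n) : Matrix (Fin n) (Fin n) ℝ :=
  Matrix.of fun a b => if (a = k ∧ b = l) ∨ (a = l ∧ b = k) then (1 : ℝ) else 0

/-!
The function ζ ↦ (Y + Im ζ • E)⁻¹ s t factors through Im ζ, so its Wirtinger derivative at 0 is
-i/2 times the real derivative of ε ↦ (Y + ε • E)⁻¹ s t, which is -(R E R) s t with R = Y⁻¹.
For E = symBasis n k l = E_kl + E_lk this entry is R s k R l t + R s l R k t, and for k = l it is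
the single term R s k R k t; symmetry of R brings both to the stated form, the factor 2^(-δ(k,l))
absorbing the doubled term on the diagonal.
-/

theorem wirtinger_ofReal_comp_im {g : ℝ → ℝ} {g' : ℝ} {z : ℂ} (hg : HasDerivAt g g' z.im) :
    wirtinger (fun ζ => (g ζ.im : ℂ)) z = -(I * g') / 2 := by
  have hf : HasFDerivAt (fun ζ : ℂ => (g ζ.im : ℂ))
      (ofRealCLM.comp ((ContinuousLinearMap.toSpanSingleton ℝ g').comp imCLM)) z :=
    ofRealCLM.hasFDerivAt.comp z (hg.hasFDerivAt.comp z imCLM.hasFDerivAt)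
  simp [wirtinger, hf.fderiv]

namespace Matrix

theorem mul_single_mul_apply {l m n o α : Type*} [Fintype m] [Fintype n] [DecidableEq m]
    [DecidableEq n] [NonUnitalNonAssocSemiring α] (A : Matrix l m α) (i : m) (j : n) (c : α)
    (B : Matrix n o α) (s : l) (t : o) :
    (A * single i j c * B) s t = A s i * c * B j t := by
  rw [mul_apply, Finset.sum_eq_single j, mul_single_apply_same]
  · exact fun x _ hx => by rw [mul_single_apply_of_ne c i j s x hx, zero_mul]
  · simp

section

attribute [local instance] Matrix.linftyOpNormedRing Matrix.linftyOpNormedAlgebra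

theorem hasDerivAt_inv_add_smul_apply {m 𝕜 : Type*} [Fintype m] [DecidableEq m] [RCLike 𝕜]
    {Y : Matrix m m 𝕜} (hY : IsUnit Y.det) (E : Matrix m m 𝕜) (s t : m) :
    HasDerivAt (fun ε : 𝕜 => (Y + ε • E)⁻¹ s t) (-(Y⁻¹ * E * Y⁻¹) s t) 0 := by
  have hline : HasDerivAt (fun ε : 𝕜 => Y + ε • E) E 0 := by
    have h := ((hasDerivAt_id (0 : 𝕜)).smul_const E).const_add Y
    rw [one_smul] at h
    exact h
  have hYu : IsUnit Y := (isUnit_iff_isUnit_det Y).mpr hY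
  have hinv : HasFDerivAt Ring.inverse (-ContinuousLinearMap.mulLeftRight 𝕜 _ Y⁻¹ Y⁻¹)
      (Y + (0 : 𝕜) • E) := by
    simpa [coe_units_inv] using hasFDerivAt_ringInverse (𝕜 := 𝕜) hYu.unit
  simp only [nonsing_inv_eq_ringInverse] at hinv ⊢
  exact ((entryLinearMap 𝕜 𝕜 s t).toContinuousLinearMap.hasFDerivAt).comp_hasDerivAt 0
    (hinv.comp_hasDerivAt 0 hline)

end

end Matrix

theorem symBasis_self {n : ℕ} (k : Fin n) : symBasis n k k = single k k 1 := by
  ext a b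
  simp only [symBasis, single, of_apply, or_self]
  grind

theorem symBasis_of_ne {n : ℕ} {k l : Fin n} (hkl : k ≠ l) :
    symBasis n k l = single k l 1 + single l k 1 := by
  ext a b
  simp only [symBasis, single, of_apply, Matrix.add_apply]
  grind

/-- with Y = Im Z symmetric invertible and R = Y⁻¹, the Wirtinger
derivative ∂R_{st}/∂Z_{kl} (obtained by varying the symmetric entry pair (k,l) of Z)
equals 2^{−δ(k,l)−1}·i·(R_{kt}R_{sl} + R_{ks}R_{tl}). -/
theorem inverse_Y_wirtinger_deriv (n : ℕ) (Y : Matrix (Fin n) (Fin n) ℝ)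
    (hsym : Y.IsSymm) (hinv : IsUnit Y.det) (k l s t : Fin n) :
    wirtinger (fun ζ : ℂ => (((Y + ζ.im • symBasis n k l)⁻¹ s t : ℝ) : ℂ)) 0 =
      (2 : ℂ) ^ (-(if k = l then (1 : ℤ) else 0) - 1) * Complex.I *
        (((Y⁻¹ k t : ℝ) : ℂ) * ((Y⁻¹ s l : ℝ) : ℂ)
          + ((Y⁻¹ k s : ℝ) : ℂ) * ((Y⁻¹ t l : ℝ) : ℂ)) := by
  have hR (a b : Fin n) : Y⁻¹ a b = Y⁻¹ b a := hsym.inv.apply b a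
  have hderiv := hasDerivAt_inv_add_smul_apply hinv (symBasis n k l) s t
  rw [← Complex.zero_im] at hderiv
  rw [wirtinger_ofReal_comp_im hderiv]
  rcases eq_or_ne k l with rfl | hkl
  · rw [symBasis_self, mul_single_mul_apply, if_pos rfl, hR k t, hR k s, hR t k]
    push_cast
    norm_num [_root_.zpow_neg]
    ring
  · rw [symBasis_of_ne hkl, Matrix.mul_add, Matrix.add_mul, Matrix.add_apply, mul_single_mul_apply,
      mul_single_mul_apply, if_neg hkl, hR k s, hR t l]
    push_cast
    norm_num [_root_.zpow_neg]
    ring
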